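/- Let t, s be unit vectors in ℝ³ with t·s ≠ −1 and t ≠ s, let u = s − t, and let N = n̂ ⊗ n̂ where n̂ is the normalization of t × s. Then N = I − (t ⊗ t + s ⊗ s)/2 − û ⊗ û + E, where the error matrix E satisfies ‖E‖ ≤ C‖u‖² for an absolute constant C (i.e. the expansion N = I − (t⊗t + s⊗s)/2 − û⊗û holds to first order in u). -/

import Mathlib

open Matrix

/-- Euclidean norm on ℝ³. -/
noncomputable def enorm (v : Fin 3 → ℝ) : ℝ := Real.sqrt (v ⬝ᵥ v)

/-- Cross product on ℝ³. -/
def cross3 (a b : Fin 3 → ℝ) : Fin 3 → ℝ :=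
  ![a 1 * b 2 - a 2 * b 1, a 2 * b 0 - a 0 * b 2, a 0 * b 1 - a 1 * b 0]

/-- Skew-symmetric cross-product matrix [v]ₓ. -/
def crossMat (v : Fin 3 → ℝ) : Matrix (Fin 3) (Fin 3) ℝ :=
  !![0, -v 2, v 1; v 2, 0, -v 0; -v 1, v 0, 0]

/-- Normalization x̂ = x / ‖x‖. -/
noncomputable def hat (x : Fin 3 → ℝ) : Fin 3 → ℝ := (_root_.enorm x)⁻¹ • x

/-- Frobenius norm of a 3×3 matrix. -/
noncomputable def frobNorm (M : Matrix (Fin 3) (Fin 3) ℝ) : ℝ :=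
  Real.sqrt (∑ i, ∑ j, (M i j) ^ 2)

/-! With `m = t + s`, the vectors `n̂, û, m̂` form an orthonormal frame (`u ⊥ m` because
`‖t‖ = ‖s‖`), so `n̂ ⊗ n̂ = I - û ⊗ û - m̂ ⊗ m̂`. Since `t ⊗ t + s ⊗ s = (m ⊗ m + u ⊗ u) / 2` and
`‖m‖² = 4 - ‖u‖²`, the error is exactly `E = (‖u‖² / 4) (û ⊗ û - m̂ ⊗ m̂)`, whose Frobenius norm
is `(√2 / 4) ‖u‖²`. -/

lemma dotProduct_self_nonneg {n R : Type*} [Fintype n] [CommRing R] [LinearOrder R]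
    [IsStrictOrderedRing R] (v : n → R) : 0 ≤ v ⬝ᵥ v :=
  Finset.sum_nonneg fun i _ => mul_self_nonneg (v i)

lemma enorm_sq (v : Fin 3 → ℝ) : _root_.enorm v ^ 2 = v ⬝ᵥ v :=
  Real.sq_sqrt (dotProduct_self_nonneg v)

lemma enorm_eq_one_iff {v : Fin 3 → ℝ} : _root_.enorm v = 1 ↔ v ⬝ᵥ v = 1 := by
  rw [_root_.enorm, Real.sqrt_eq_one]

lemma hat_dotProduct_hat (v w : Fin 3 → ℝ) :
    hat v ⬝ᵥ hat w = (_root_.enorm v * _root_.enorm w)⁻¹ * (v ⬝ᵥ w) := by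
  simp only [hat, smul_dotProduct, dotProduct_smul, smul_eq_mul, mul_inv]
  ring

lemma hat_dotProduct_hat_self {v : Fin 3 → ℝ} (hv : v ≠ 0) : hat v ⬝ᵥ hat v = 1 := by
  rw [hat_dotProduct_hat, ← sq, enorm_sq]
  exact inv_mul_cancel₀ (dotProduct_self_eq_zero.not.mpr hv)

lemma vecMulVec_hat_self (v : Fin 3 → ℝ) :
    vecMulVec (hat v) (hat v) = (v ⬝ᵥ v)⁻¹ • vecMulVec v v := by
  rw [hat, smul_vecMulVec, vecMulVec_smul, smul_smul, ← sq, inv_pow, enorm_sq]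

lemma vecMulVec_self_eq_smul_hat (v : Fin 3 → ℝ) :
    vecMulVec v v = (v ⬝ᵥ v) • vecMulVec (hat v) (hat v) := by
  rcases eq_or_ne v 0 with rfl | hv
  · simp
  rw [vecMulVec_hat_self, smul_smul, mul_inv_cancel₀ (dotProduct_self_eq_zero.not.mpr hv),
    one_smul]

lemma vecMulVec_cross3_self (t s : Fin 3 → ℝ) :
    vecMulVec (cross3 t s) (cross3 t s)
      = ((t ⬝ᵥ t) * (s ⬝ᵥ s) - (t ⬝ᵥ s) ^ 2) • (1 : Matrix (Fin 3) (Fin 3) ℝ)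
        - (s ⬝ᵥ s) • vecMulVec t t - (t ⬝ᵥ t) • vecMulVec s s
        + (t ⬝ᵥ s) • (vecMulVec t s + vecMulVec s t) := by
  ext i j
  fin_cases i <;> fin_cases j <;>
    simp [cross3, vecMulVec, dotProduct, Fin.sum_univ_three] <;> ring

lemma cross3_dotProduct_self (t s : Fin 3 → ℝ) :
    cross3 t s ⬝ᵥ cross3 t s = (t ⬝ᵥ t) * (s ⬝ᵥ s) - (t ⬝ᵥ s) ^ 2 := by
  simp only [dotProduct, cross3, Fin.sum_univ_three, cons_val_zero, cons_val_one, cons_val]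
  ring

lemma vecMulVec_add_vecMulVec_eq (t s : Fin 3 → ℝ) :
    vecMulVec t t + vecMulVec s s
      = (2 : ℝ)⁻¹ • (vecMulVec (t + s) (t + s) + vecMulVec (s - t) (s - t)) := by
  simp only [add_vecMulVec, vecMulVec_add, sub_vecMulVec, vecMulVec_sub]
  module

lemma frobNorm_smul (r : ℝ) (M : Matrix (Fin 3) (Fin 3) ℝ) :
    frobNorm (r • M) = |r| * frobNorm M := by
  simp only [frobNorm, Matrix.smul_apply, smul_eq_mul, mul_pow, ← Finset.mul_sum]
  rw [Real.sqrt_mul (sq_nonneg r), Real.sqrt_sq_eq_abs]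

lemma frobNorm_vecMulVec_self_sub_vecMulVec_self (a b : Fin 3 → ℝ) :
    frobNorm (vecMulVec a a - vecMulVec b b)
      = √((a ⬝ᵥ a) ^ 2 - 2 * (a ⬝ᵥ b) ^ 2 + (b ⬝ᵥ b) ^ 2) := by
  simp only [frobNorm, Matrix.sub_apply, vecMulVec_apply]
  congr 1
  simp only [dotProduct, Fin.sum_univ_three]
  ring

section UnitVectors

variable {t s : Fin 3 → ℝ}

lemma sub_dotProduct_sub_of_unit (ht : t ⬝ᵥ t = 1) (hs : s ⬝ᵥ s = 1) :
    (s - t) ⬝ᵥ (s - t) = 2 - 2 * (t ⬝ᵥ s) := by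
  simp only [sub_dotProduct, dotProduct_sub, ht, hs, dotProduct_comm s t]; ring

lemma add_dotProduct_add_of_unit (ht : t ⬝ᵥ t = 1) (hs : s ⬝ᵥ s = 1) :
    (t + s) ⬝ᵥ (t + s) = 2 + 2 * (t ⬝ᵥ s) := by
  simp only [add_dotProduct, dotProduct_add, ht, hs, dotProduct_comm s t]; ring

lemma sub_dotProduct_add_of_unit (ht : t ⬝ᵥ t = 1) (hs : s ⬝ᵥ s = 1) :
    (s - t) ⬝ᵥ (t + s) = 0 := by
  simp only [sub_dotProduct, dotProduct_add, ht, hs, dotProduct_comm s t]; ring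

lemma dotProduct_ne_one_of_ne (ht : t ⬝ᵥ t = 1) (hs : s ⬝ᵥ s = 1) (hts : t ≠ s) :
    t ⬝ᵥ s ≠ 1 := by
  intro h
  have : (s - t) ⬝ᵥ (s - t) = 0 := by rw [sub_dotProduct_sub_of_unit ht hs, h]; ring
  exact hts (sub_eq_zero.mp (dotProduct_self_eq_zero.mp this)).symm

lemma add_ne_zero_of_dotProduct_ne_neg_one (ht : t ⬝ᵥ t = 1) (hs : s ⬝ᵥ s = 1)
    (hc : t ⬝ᵥ s ≠ -1) : t + s ≠ 0 := by
  intro h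
  have := add_dotProduct_add_of_unit ht hs
  rw [h, zero_dotProduct] at this
  exact hc (by linarith)

lemma vecMulVec_hat_frame_sum_eq_one (ht : t ⬝ᵥ t = 1) (hs : s ⬝ᵥ s = 1)
    (hc₁ : t ⬝ᵥ s ≠ 1) (hc₂ : t ⬝ᵥ s ≠ -1) :
    vecMulVec (hat (cross3 t s)) (hat (cross3 t s)) + vecMulVec (hat (s - t)) (hat (s - t))
      + vecMulVec (hat (t + s)) (hat (t + s)) = 1 := by
  simp only [vecMulVec_hat_self, vecMulVec_cross3_self, cross3_dotProduct_self,
    sub_dotProduct_sub_of_unit ht hs, add_dotProduct_add_of_unit ht hs, ht, hs, mul_one,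
    add_vecMulVec, vecMulVec_add, sub_vecMulVec, vecMulVec_sub]
  generalize t ⬝ᵥ s = c at hc₁ hc₂ ⊢
  have h₁ : 1 - c ≠ 0 := sub_ne_zero.mpr hc₁.symm
  have h₂ : 1 + c ≠ 0 := by rwa [add_comm, ← sub_neg_eq_add, sub_ne_zero]
  have h₃ : 1 - c ^ 2 ≠ 0 := by
    rw [← one_pow 2, sq_sub_sq]; exact mul_ne_zero h₂ h₁
  match_scalars <;> field_simp <;> ring

lemma normal_tensor_error_eq (ht : t ⬝ᵥ t = 1) (hs : s ⬝ᵥ s = 1)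
    (hc₁ : t ⬝ᵥ s ≠ 1) (hc₂ : t ⬝ᵥ s ≠ -1) :
    vecMulVec (hat (cross3 t s)) (hat (cross3 t s)) -
        (1 - (2 : ℝ)⁻¹ • (vecMulVec t t + vecMulVec s s) - vecMulVec (hat (s - t)) (hat (s - t)))
      = (_root_.enorm (s - t) ^ 2 / 4) •
          (vecMulVec (hat (s - t)) (hat (s - t)) - vecMulVec (hat (t + s)) (hat (t + s))) := by
  have hN : vecMulVec (hat (cross3 t s)) (hat (cross3 t s))
      = 1 - vecMulVec (hat (s - t)) (hat (s - t)) - vecMulVec (hat (t + s)) (hat (t + s)) := by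
    rw [← vecMulVec_hat_frame_sum_eq_one ht hs hc₁ hc₂]; abel
  rw [hN, vecMulVec_add_vecMulVec_eq, vecMulVec_self_eq_smul_hat (t + s),
    vecMulVec_self_eq_smul_hat (s - t), enorm_sq,
    sub_dotProduct_sub_of_unit ht hs, add_dotProduct_add_of_unit ht hs]
  module

lemma frobNorm_normal_tensor_error (ht : t ⬝ᵥ t = 1) (hs : s ⬝ᵥ s = 1)
    (hts : t ≠ s) (hc : t ⬝ᵥ s ≠ -1) :
    frobNorm (vecMulVec (hat (cross3 t s)) (hat (cross3 t s)) -
        (1 - (2 : ℝ)⁻¹ • (vecMulVec t t + vecMulVec s s) - vecMulVec (hat (s - t)) (hat (s - t))))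
      = √2 / 4 * _root_.enorm (s - t) ^ 2 := by
  have hu : hat (s - t) ⬝ᵥ hat (s - t) = 1 := hat_dotProduct_hat_self (sub_ne_zero.mpr hts.symm)
  have hm : hat (t + s) ⬝ᵥ hat (t + s) = 1 :=
    hat_dotProduct_hat_self (add_ne_zero_of_dotProduct_ne_neg_one ht hs hc)
  have hum : hat (s - t) ⬝ᵥ hat (t + s) = 0 := by
    rw [hat_dotProduct_hat, sub_dotProduct_add_of_unit ht hs, mul_zero]
  rw [normal_tensor_error_eq ht hs (dotProduct_ne_one_of_ne ht hs hts) hc, frobNorm_smul,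
    frobNorm_vecMulVec_self_sub_vecMulVec_self, hu, hm, hum, abs_of_nonneg (by positivity)]
  norm_num
  ring

end UnitVectors

theorem normal_tensor_expansion :
    ∃ C : ℝ, 0 < C ∧ ∀ t s : Fin 3 → ℝ, _root_.enorm t = 1 → _root_.enorm s = 1 →
      t ⬝ᵥ s ≠ -1 → t ≠ s →
      frobNorm (vecMulVec (hat (cross3 t s)) (hat (cross3 t s)) -
        (1 - ((2 : ℝ)⁻¹) • (vecMulVec t t + vecMulVec s s) -
          vecMulVec (hat (s - t)) (hat (s - t)))) ≤ C * (_root_.enorm (s - t)) ^ 2 := by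
  refine ⟨√2 / 4, by positivity, fun t s ht hs hc hts => ?_⟩
  rw [enorm_eq_one_iff] at ht hs
  exact (frobNorm_normal_tensor_error ht hs hts hc).le
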